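/- Let R be a (not necessarily commutative) ring, let n be a natural number, and let A₁₁, A₁₂, A₂₁, A₂₂, B₁₁, B₁₂, B₂₁, B₂₂ be n×n matrices over R. Define the seven Strassen products M₁ = (A₁₁+A₂₂)(B₁₁+B₂₂), M₂ = (A₂₁+A₂₂)B₁₁, M₃ = A₁₁(B₁₂−B₂₂), M₄ = A₂₂(B₂₁−B₁₁), M₅ = (A₁₁+A₁₂)B₂₂, M₆ = (A₂₁−A₁₁)(B₁₁+B₁₂), M₇ = (A₁₂−A₂₂)(B₂₁+B₂₂). Then the block matrix product satisfies fromBlocks A₁₁ A₁₂ A₂₁ A₂₂ * fromBlocks B₁₁ B₁₂ B₂₁ B₂₂ = fromBlocks (M₁+M₄−M₅+M₇) (M₃+M₅) (M₂+M₄) (M₁−M₂+M₃+M₆). In other words, Strassen's scheme computes the product of two matrices from only 7 block multiplications (and 18 block additions/subtractions). -/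
import Mathlib

theorem strassen_block_product
    {R : Type*} [Ring R] {n : ℕ}
    (A₁₁ A₁₂ A₂₁ A₂₂ B₁₁ B₁₂ B₂₁ B₂₂ : Matrix (Fin n) (Fin n) R)
    (M₁ M₂ M₃ M₄ M₅ M₆ M₇ : Matrix (Fin n) (Fin n) R)
    (hM₁ : M₁ = (A₁₁ + A₂₂) * (B₁₁ + B₂₂))
    (hM₂ : M₂ = (A₂₁ + A₂₂) * B₁₁)
    (hM₃ : M₃ = A₁₁ * (B₁₂ - B₂₂))
    (hM₄ : M₄ = A₂₂ * (B₂₁ - B₁₁))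
    (hM₅ : M₅ = (A₁₁ + A₁₂) * B₂₂)
    (hM₆ : M₆ = (A₂₁ - A₁₁) * (B₁₁ + B₁₂))
    (hM₇ : M₇ = (A₁₂ - A₂₂) * (B₂₁ + B₂₂)) :
    Matrix.fromBlocks A₁₁ A₁₂ A₂₁ A₂₂ * Matrix.fromBlocks B₁₁ B₁₂ B₂₁ B₂₂ =
      Matrix.fromBlocks (M₁ + M₄ - M₅ + M₇) (M₃ + M₅) (M₂ + M₄) (M₁ - M₂ + M₃ + M₆) := by
  subst hM₁ hM₂ hM₃ hM₄ hM₅ hM₆ hM₇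
  rw [Matrix.fromBlocks_multiply]
  noncomm_ring
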